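/- Let k be an algebraically closed field of characteristic not dividing d!, let K be an m-local field with residue field k, and let F be a one-variable function field over K such that some normal K-curve with function field F has a K-point. Then u_diag(d,F) ≥ d^{m+1}. -/

import Mathlib

def IsotropicDiag (K : Type*) [Field K] (d : ℕ) {ι : Type*} [Fintype ι] (a : ι → K) : Prop :=
  ∃ x : ι → K, x ≠ 0 ∧ ∑ i, a i * x i ^ d = 0

noncomputable def uDiag (d : ℕ) (K : Type*) [Field K] : ℕ∞ :=
  ⨆ (n : ℕ) (_ : ∃ a : Fin n → K, (∀ i, a i ≠ 0) ∧ ¬ IsotropicDiag K d a), (n : ℕ∞)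

/-- `F` is a `C_r`-field. -/
def IsCrField (F : Type*) [Field F] (r : ℕ) : Prop :=
  ∀ (d n : ℕ), 1 ≤ d → d ^ r < n → ∀ f : MvPolynomial (Fin n) F, f.IsHomogeneous d →
    ∃ x : Fin n → F, x ≠ 0 ∧ MvPolynomial.eval x f = 0

/-- A discrete valuation ring `A` is *excellent* if the extension `K̂/K` is separable, where
`K = Frac A` and `K̂` is the fraction field of the completion of `A`. -/
def ExcellentDVR (A : Type*) [CommRing A] [IsDomain A] [IsDiscreteValuationRing A] : Prop :=
  ∃ f : FractionRing A →+*
      FractionRing (AdicCompletion (IsLocalRing.maximalIdeal A) A),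
    (∀ a : A, f (algebraMap A (FractionRing A) a) =
      algebraMap (AdicCompletion (IsLocalRing.maximalIdeal A) A)
        (FractionRing (AdicCompletion (IsLocalRing.maximalIdeal A) A))
        (algebraMap A (AdicCompletion (IsLocalRing.maximalIdeal A) A) a)) ∧
    letI := f.toAlgebra
    Algebra.IsSeparable (FractionRing A)
      (FractionRing (AdicCompletion (IsLocalRing.maximalIdeal A) A))

/-- One step in the tower defining an `m`-local field: `K` is (isomorphic to) the fraction
field of an excellent Henselian discrete valuation ring with residue field (isomorphic to)
`k`. -/
structure HenselianDVRStep (k K : Type) [Field k] [Field K] : Type 1 where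
  A : Type
  [commRing : CommRing A]
  [isDomain : IsDomain A]
  [dvr : IsDiscreteValuationRing A]
  [henselian : HenselianLocalRing A]
  excellent : ExcellentDVR A
  fracEquiv : FractionRing A ≃+* K
  resEquiv : IsLocalRing.ResidueField A ≃+* k

/-- `K` is an `m`-local field with residue field `k`: there is a tower of fields
`k = k₀, k₁, …, k_m = K` where each `kᵢ` is the fraction field of an excellent Henselian
discrete valuation ring with residue field `k_{i−1}`. -/
def IsMLocalField (m : ℕ) (k K : Type) [Field k] [Field K] : Prop :=
  ∃ (fld : Fin (m + 1) → Type) (_inst : ∀ i, Field (fld i)),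
    Nonempty (fld 0 ≃+* k) ∧ Nonempty (fld (Fin.last m) ≃+* K) ∧
      ∀ i : Fin m, Nonempty (HenselianDVRStep (fld i.castSucc) (fld i.succ))


/-! Springer's construction: if `⟨u₁, …, uₙ⟩` is an anisotropic diagonal form of degree `d` over
the residue field of a discrete valuation ring with uniformizer `π`, then `⟨π ^ j * uᵢ⟩` (`j < d`)
is anisotropic over its fraction field. In an integral zero, reducing modulo `π` the terms of
lowest `π`-order shows, by induction on `j`, that every coordinate is divisible by `π`; by
homogeneity the zero can then be divided by `π` indefinitely, so it vanishes. Hence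
`u_diag(d, Frac A) ≥ d · u_diag(d, residue field)`. Iterating this along the tower of the
`m`-local field from `u_diag(d, k) ≥ 1`, and once more at the local ring of the `K`-point,
gives `d ^ (m + 1)`. -/

open IsLocalRing

section DiagForm

variable {R S ι : Type*} [Fintype ι]

def diagForm [CommSemiring R] (d : ℕ) (a x : ι → R) : R :=
  ∑ i, a i * x i ^ d

variable [CommSemiring R] [CommSemiring S]

theorem map_diagForm {F : Type*} [FunLike F R S] [RingHomClass F R S] (f : F) (d : ℕ)
    (a x : ι → R) :
    f (diagForm d a x) = diagForm d (f ∘ a) (f ∘ x) := by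
  simp [diagForm]

theorem diagForm_smul (d : ℕ) (a x : ι → R) (c : R) :
    diagForm d a (c • x) = c ^ d * diagForm d a x := by
  simp only [diagForm, Finset.mul_sum, Pi.smul_apply, smul_eq_mul, mul_pow]
  exact Finset.sum_congr rfl fun _ _ => by ring

theorem diagForm_comp_equiv {κ : Type*} [Fintype κ] (e : ι ≃ κ) (d : ℕ) (a x : κ → R) :
    diagForm d (a ∘ e) (x ∘ e) = diagForm d a x :=
  e.sum_comp fun k => a k * x k ^ d

end DiagForm

theorem IsotropicDiag.of_map_ringEquiv {K L ι : Type*} [Field K] [Field L] [Fintype ι]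
    (e : K ≃+* L) {d : ℕ} {a : ι → K} (h : IsotropicDiag L d (e ∘ a)) : IsotropicDiag K d a := by
  obtain ⟨x, hx0, hx⟩ := h
  refine ⟨e.symm ∘ x, fun h0 => hx0 (funext fun i => by simpa using congr_fun h0 i), ?_⟩
  apply e.injective
  change e (diagForm d a (e.symm ∘ x)) = e 0
  rw [map_diagForm, map_zero]
  simpa [Function.comp_def, diagForm] using hx

theorem IsotropicDiag.of_comp_equiv {K ι κ : Type*} [Field K] [Fintype ι] [Fintype κ]
    (e : ι ≃ κ) {d : ℕ} {a : κ → K} (h : IsotropicDiag K d (a ∘ e)) : IsotropicDiag K d a := by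
  obtain ⟨x, hx0, hx⟩ := h
  refine ⟨x ∘ e.symm, fun h0 => hx0 (funext fun i => by simpa using congr_fun h0 (e i)), ?_⟩
  exact (diagForm_comp_equiv e d a _).symm.trans (by simpa [Function.comp_assoc, diagForm] using hx)

section UDiag

variable {K L : Type*} [Field K] [Field L] {d : ℕ}

theorem le_uDiag {n : ℕ} {a : Fin n → K} (ha : ∀ i, a i ≠ 0) (hani : ¬IsotropicDiag K d a) :
    (n : ℕ∞) ≤ uDiag d K :=
  le_iSup₂ (f := fun (n : ℕ) (_ : ∃ a : Fin n → K, (∀ i, a i ≠ 0) ∧ ¬IsotropicDiag K d a) =>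
    (n : ℕ∞)) n ⟨a, ha, hani⟩

theorem le_uDiag_of_equiv {ι : Type*} [Fintype ι] {n : ℕ} (e : ι ≃ Fin n) {a : ι → K}
    (ha : ∀ i, a i ≠ 0) (hani : ¬IsotropicDiag K d a) : (n : ℕ∞) ≤ uDiag d K :=
  le_uDiag (a := a ∘ e.symm) (fun _ => ha _) fun h => hani (h.of_comp_equiv e.symm)

theorem one_le_uDiag : 1 ≤ uDiag d K := by
  refine le_uDiag (n := 1) (a := fun _ => 1) (fun _ => one_ne_zero) ?_
  rintro ⟨x, hx0, hx⟩
  simp only [Fin.sum_univ_one, one_mul] at hx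
  exact hx0 (funext fun i => by simpa [Subsingleton.elim i 0] using (pow_eq_zero_iff'.mp hx).1)

theorem uDiag_le_of_ringEquiv (e : K ≃+* L) : uDiag d K ≤ uDiag d L :=
  iSup₂_le fun _ ⟨a, ha, hani⟩ =>
    le_uDiag (a := e ∘ a) (fun i => by simpa using ha i) fun h => hani (h.of_map_ringEquiv e)

theorem uDiag_congr (e : K ≃+* L) : uDiag d K = uDiag d L :=
  (uDiag_le_of_ringEquiv e).antisymm (uDiag_le_of_ringEquiv e.symm)

theorem mul_uDiag_le {K' : Type*} [Field K'] {c : ℕ}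
    (h : ∀ n (a : Fin n → K), (∀ i, a i ≠ 0) → ¬IsotropicDiag K d a →
      ((c * n : ℕ) : ℕ∞) ≤ uDiag d K') :
    c * uDiag d K ≤ uDiag d K' := by
  simp only [uDiag, ENat.mul_iSup]
  exact iSup₂_le fun n ⟨a, ha, hani⟩ => by exact_mod_cast h n a ha hani

end UDiag

theorem mem_maximalIdeal_of_diagForm_mem {A ι : Type*} [CommRing A] [IsLocalRing A] [Fintype ι]
    {d : ℕ} {u : ι → A} (hu : ¬IsotropicDiag (ResidueField A) d (residue A ∘ u)) {z : ι → A}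
    (hz : diagForm d u z ∈ maximalIdeal A) (i : ι) : z i ∈ maximalIdeal A := by
  rw [← residue_eq_zero_iff] at hz ⊢
  by_contra hzi
  exact hu ⟨residue A ∘ z, fun h => hzi (congr_fun h i), (map_diagForm _ d u z).symm.trans hz⟩

theorem dvd_of_sum_pow_mul_eq_zero {A : Type*} [CommRing A] [IsDomain A] {π : A} (hπ : π ≠ 0)
    {d : ℕ} {T : Fin d → A} (hT : ∑ j : Fin d, π ^ (j : ℕ) * T j = 0) {j : Fin d}
    (hlt : ∀ j' < j, π ^ d ∣ T j') : π ∣ T j := by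
  have hrest : π ^ ((j : ℕ) + 1) ∣ ∑ j' ∈ Finset.univ.erase j, π ^ (j' : ℕ) * T j' := by
    refine Finset.dvd_sum fun j' hj' => ?_
    rcases lt_or_gt_of_ne (Finset.ne_of_mem_erase hj') with hj'j | hjj'
    · exact ((pow_dvd_pow π j.isLt).trans (hlt j' hj'j)).mul_left _
    · exact (pow_dvd_pow π hjj').mul_right _
  have hj : π ^ ((j : ℕ) + 1) ∣ π ^ (j : ℕ) * T j := by
    rw [← Finset.add_sum_erase _ _ (Finset.mem_univ j)] at hT
    rw [eq_neg_of_add_eq_zero_left hT, dvd_neg]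
    exact hrest
  rwa [pow_succ, mul_dvd_mul_iff_left (pow_ne_zero _ hπ)] at hj

theorem dvd_of_diagForm_pow_mul_eq_zero {A ι : Type*} [CommRing A] [IsDomain A] [IsLocalRing A]
    [Fintype ι] {π : A} (hπ : maximalIdeal A = Ideal.span {π}) (hπ0 : π ≠ 0) {d : ℕ}
    {u : ι → A} (hu : ¬IsotropicDiag (ResidueField A) d (residue A ∘ u)) {z : Fin d × ι → A}
    (hz : diagForm d (fun q => π ^ (q.1 : ℕ) * u q.2) z = 0) (q : Fin d × ι) : π ∣ z q := by
  have hmem (a : A) : a ∈ maximalIdeal A ↔ π ∣ a := by rw [hπ, Ideal.mem_span_singleton]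
  set T : Fin d → A := fun j => diagForm d u fun i => z (j, i)
  have hT : ∑ j : Fin d, π ^ (j : ℕ) * T j = 0 := by
    rw [← hz, diagForm, Fintype.sum_prod_type]
    simp only [T, diagForm, Finset.mul_sum, mul_assoc]
  obtain ⟨j, i⟩ := q
  induction j using WellFoundedLT.induction generalizing i with
  | ind j ih =>
    have hTj : π ∣ T j := dvd_of_sum_pow_mul_eq_zero hπ0 hT fun j' hj' =>
      Finset.dvd_sum fun i _ => (pow_dvd_pow_of_dvd (ih j' hj' i) d).mul_left _
    exact (hmem _).mp (mem_maximalIdeal_of_diagForm_mem hu ((hmem _).mpr hTj) i)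

theorem eq_zero_of_diagForm_eq_zero_of_forall_dvd {A ι : Type*} [CommRing A] [IsDomain A]
    [WfDvdMonoid A] [Fintype ι] {π : A} (hπ : ¬IsUnit π) (hπ0 : π ≠ 0) {d : ℕ} {a : ι → A}
    (hdvd : ∀ z, diagForm d a z = 0 → ∀ i, π ∣ z i) {z : ι → A} (hz : diagForm d a z = 0) :
    z = 0 := by
  have hpow (k : ℕ) : ∀ z, diagForm d a z = 0 → ∀ i, π ^ k ∣ z i := by
    induction k with
    | zero => simp
    | succ k ih =>
      intro z hz
      choose w hw using hdvd z hz
      have hzw : z = π • w := funext hw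
      have hw0 : diagForm d a w = 0 := by
        rw [hzw, diagForm_smul] at hz
        exact (mul_eq_zero.mp hz).resolve_left (pow_ne_zero d hπ0)
      intro i
      rw [hw i, pow_succ']
      exact mul_dvd_mul_left π (ih w hw0 i)
  funext i
  by_contra hzi
  exact FiniteMultiplicity.not_iff_forall.mpr (fun k => hpow k z hz i)
    (FiniteMultiplicity.of_not_isUnit hπ hzi)

theorem exists_diagForm_eq_zero_of_isotropicDiag {A Fr ι : Type*} [CommRing A] [IsDomain A]
    [Field Fr] [Algebra A Fr] [IsFractionRing A Fr] [Fintype ι] {d : ℕ} {a : ι → A}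
    (h : IsotropicDiag Fr d (algebraMap A Fr ∘ a)) : ∃ y : ι → A, y ≠ 0 ∧ diagForm d a y = 0 := by
  obtain ⟨x, hx0, hx⟩ := h
  obtain ⟨c, hc⟩ := IsLocalization.exist_integer_multiples_of_finite (nonZeroDivisors A) x
  choose y hy using hc
  have hc0 : algebraMap A Fr c ≠ 0 :=
    (map_ne_zero_iff _ (IsFractionRing.injective A Fr)).mpr (nonZeroDivisors.coe_ne_zero c)
  have hyx : algebraMap A Fr ∘ y = algebraMap A Fr c • x :=
    funext fun i => (hy i).trans (Algebra.smul_def _ _)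
  refine ⟨y, fun hy0 => hx0 ?_, IsFractionRing.injective A Fr ?_⟩
  · rw [hy0] at hyx
    refine (smul_eq_zero.mp (hyx.symm.trans ?_)).resolve_left hc0
    exact funext fun _ => map_zero _
  · rw [map_diagForm, map_zero, hyx, diagForm_smul]
    exact mul_eq_zero_of_right _ hx

theorem mul_uDiag_residueField_le (A Fr : Type*) [CommRing A] [IsDomain A]
    [IsDiscreteValuationRing A] [Field Fr] [Algebra A Fr] [IsFractionRing A Fr] (d : ℕ) :
    d * uDiag d (ResidueField A) ≤ uDiag d Fr := by
  obtain ⟨π, hπ⟩ := IsDiscreteValuationRing.exists_irreducible A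
  refine mul_uDiag_le fun n b hb0 hbani => ?_
  choose u hu using fun i => residue_surjective (b i)
  obtain rfl : residue A ∘ u = b := funext hu
  set a : Fin d × Fin n → A := fun q => π ^ (q.1 : ℕ) * u q.2
  have ha0 (q : Fin d × Fin n) : algebraMap A Fr (a q) ≠ 0 := by
    refine (map_ne_zero_iff _ (IsFractionRing.injective A Fr)).mpr
      (mul_ne_zero (pow_ne_zero _ hπ.ne_zero) fun h => hb0 q.2 ?_)
    simp [h]
  have hani : ¬IsotropicDiag Fr d (algebraMap A Fr ∘ a) := fun h => by
    obtain ⟨y, hy0, hy⟩ := exists_diagForm_eq_zero_of_isotropicDiag h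
    exact hy0 (eq_zero_of_diagForm_eq_zero_of_forall_dvd hπ.not_isUnit hπ.ne_zero
      (fun z hz => dvd_of_diagForm_pow_mul_eq_zero hπ.maximalIdeal_eq hπ.ne_zero hbani hz) hy)
  exact le_uDiag_of_equiv finProdFinEquiv ha0 hani

theorem HenselianDVRStep.mul_uDiag_le {k K : Type} [Field k] [Field K] (S : HenselianDVRStep k K)
    (d : ℕ) : d * uDiag d k ≤ uDiag d K := by
  obtain ⟨A, -, eFrac, eRes⟩ := S
  rw [← uDiag_congr eRes, ← uDiag_congr eFrac]
  exact mul_uDiag_residueField_le A (FractionRing A) d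

theorem IsMLocalField.pow_le_uDiag {m : ℕ} {k K : Type} [Field k] [Field K]
    (h : IsMLocalField m k K) (d : ℕ) : (d : ℕ∞) ^ m ≤ uDiag d K := by
  obtain ⟨fld, _, -, ⟨eK⟩, hstep⟩ := h
  have htower (i : Fin (m + 1)) : (d : ℕ∞) ^ (i : ℕ) ≤ uDiag d (fld i) := by
    induction i using Fin.induction with
    | zero => simpa using one_le_uDiag
    | succ i ih =>
      obtain ⟨S⟩ := hstep i
      calc (d : ℕ∞) ^ ((i : ℕ) + 1) = d * d ^ (i : ℕ) := pow_succ' _ _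
        _ ≤ d * uDiag d (fld i.castSucc) := by gcongr; exact ih
        _ ≤ uDiag d (fld i.succ) := S.mul_uDiag_le d
  simpa [uDiag_congr eK] using htower (Fin.last m)

/-- A `K`-point of a normal `K`-curve with function field `F` is encoded by its local ring: a
discrete valuation subring of `F` containing `K`, with residue field `K`. -/
theorem uDiag_functionField_ge_general (d m : ℕ)
    (k K F : Type) [Field k] [Field K] [Field F]
    (hml : IsMLocalField m k K)
    [Algebra K F]
    (hpoint : ∃ (A : ValuationSubring F) (_ : IsDiscreteValuationRing A),
      (∀ c : K, algebraMap K F c ∈ A) ∧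
        Nonempty (IsLocalRing.ResidueField A ≃+* K)) :
    (d : ℕ∞) ^ (m + 1) ≤ uDiag d F := by
  obtain ⟨A, _, -, ⟨eA⟩⟩ := hpoint
  calc (d : ℕ∞) ^ (m + 1) = d * d ^ m := pow_succ' _ _
    _ ≤ d * uDiag d K := by gcongr; exact hml.pow_le_uDiag d
    _ = d * uDiag d (ResidueField A) := by rw [uDiag_congr eA]
    _ ≤ uDiag d F := mul_uDiag_residueField_le A F d

/-- **Let `k` be an algebraically closed field of characteristic not dividing `d!`, `K` an
`m`-local field with residue field `k`, and `F` a one-variable function field over `K` such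
that some normal `K`-curve with function field `F` has a `K`-point.  Then
`u_diag(d,F) ≥ d^{m+1}`.**

The existence of a `K`-point on a normal `K`-curve with function field `F` is formalized by
its local ring: a discrete valuation ring `A ⊆ F` which is a valuation subring of `F`
containing `K`, with fraction field `F` and residue field `K`. -/
theorem uDiag_functionField_ge (d m : ℕ) (hd : 1 ≤ d)
    (k K F : Type) [Field k] [Field K] [Field F] [IsAlgClosed k]
    (hchar : (d.factorial : k) ≠ 0)
    (hml : IsMLocalField m k K)
    [Algebra K F]
    (hfunction : ∃ x : F, Transcendental K x ∧
      FiniteDimensional (IntermediateField.adjoin K {x}) F)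
    (hpoint : ∃ (A : ValuationSubring F) (_ : IsDiscreteValuationRing A),
      (∀ c : K, algebraMap K F c ∈ A) ∧
        Nonempty (IsLocalRing.ResidueField A ≃+* K)) :
    (d : ℕ∞) ^ (m + 1) ≤ uDiag d F :=
  uDiag_functionField_ge_general d m k K F hml hpoint
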